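/- arXiv:2203.06048 — 2 statements merged into one kernel-verified Lean document; each statement's English description precedes it below -/
import Mathlib

section
/- Let Φ(r,s,t) = γ(r,s) − t·n(γ(r,s)) be tubular coordinates near Γ, and let 𝓑(y) = dΦ_y^{-1}(e₃) with components (𝓑₁,𝓑₂,𝓑₃) (the coordinates of the constant field e₃ in the frame dΦ_y of the canonical basis). Then the normal component satisfies ∂_t 𝓑₃(r,s,0) = 0 for all (r,s); i.e., the t-derivative of the third component of the pulled-back magnetic field vanishes on the boundary. -/
noncomputable section

open MeasureTheory RealInnerProductSpace

abbrev E3 := EuclideanSpace ℝ (Fin 3)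

def e3 : E3 := EuclideanSpace.single 2 1

/-- In the tubular coordinates `Φ(r,s,t) = γ(r,s) − t n(γ(r,s))`,
write the constant field `e₃` in the frame `dΦ` of the canonical basis:
`e₃ = 𝓑₁ (Id − t dn)(∂_rγ) + 𝓑₂ (Id − t dn)(∂_sγ) − 𝓑₃ n`.  Then
`∂_t 𝓑₃(r,s,0) = 0` for all `(r,s)`. -/
theorem statement10
    (n : E3 → E3) (hn : ContDiff ℝ (⊤ : ℕ∞) n)
    (γ : ℝ → ℝ → E3) (hγ : ContDiff ℝ (⊤ : ℕ∞) fun q : ℝ × ℝ => γ q.1 q.2)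
    (B1 B2 B3 : ℝ → ℝ → ℝ → ℝ)
    (hB1d : ∀ r s, DifferentiableAt ℝ (B1 r s) 0)
    (hB2d : ∀ r s, DifferentiableAt ℝ (B2 r s) 0)
    (hB3d : ∀ r s, DifferentiableAt ℝ (B3 r s) 0)
    -- decomposition of e₃ in the moving frame of dΦ
    (hdecomp : ∀ r s t,
      e3 = B1 r s t •
          (deriv (fun w => γ w s) r - t • fderiv ℝ n (γ r s) (deriv (fun w => γ w s) r))
        + B2 r s t •
          (deriv (fun w => γ r w) s - t • fderiv ℝ n (γ r s) (deriv (fun w => γ r w) s))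
        - B3 r s t • n (γ r s))
    -- geometric facts about the frame
    (hnunit : ∀ r s, ‖n (γ r s)‖ = 1)
    (htan_r : ∀ r s, ⟪deriv (fun w => γ w s) r, n (γ r s)⟫ = 0)
    (htan_s : ∀ r s, ⟪deriv (fun w => γ r w) s, n (γ r s)⟫ = 0)
    (hWn : ∀ r s, ∀ u : E3, ⟪fderiv ℝ n (γ r s) u, n (γ r s)⟫ = 0) :
    ∀ r s, deriv (fun t => B3 r s t) 0 = 0 := by
  intro r s
  have hconst : ∀ t, B3 r s t = -⟪e3, n (γ r s)⟫ := by
    intro t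
    have h := congrArg (fun v : E3 => ⟪v, n (γ r s)⟫) (hdecomp r s t)
    simp only [inner_sub_left, inner_add_left, real_inner_smul_left,
      htan_r, htan_s, hWn] at h
    have hnn : ⟪n (γ r s), n (γ r s)⟫ = 1 := by
      rw [real_inner_self_eq_norm_sq, hnunit]; norm_num
    rw [hnn] at h
    linarith
  have : (fun t => B3 r s t) = fun _ => -⟪e3, n (γ r s)⟫ := funext hconst
  rw [this, deriv_const]
end
end

section
/- With u₁(s) = ∂₁[|g|^{1/2}𝓑₂](0,s,0), u₂(s) = (∂₂[|g|^{1/2}𝓑₂] + ∂₃[|g|^{1/2}𝓑₃])(0,s,0), α(r,s) the metric coefficient, and φ(s) the angle of the magnetic field along Γ (cos φ = 𝓑₁(0,s,0), sin φ = 𝓑₂(0,s,0)), the following identity holds for all s: −2u₂(s) cos φ(s) + 2u₁(s) sin φ(s) + cos²φ(s)·∂_r(α^{-1})(0,s) = 0. -/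
/-!
Differentiating the normalization at `r = 0` gives
`2 cos φ B1'(0) + sin² φ α'(0) + 2 sin φ B2'(0) = 0`, and `(α⁻¹)'(0) = -α'(0)` because `α(0) = 1`;
after substituting `u₁, u₂` the claimed expression is exactly the left-hand side of this relation.
-/

lemma isLocalMax_of_add_sq_eq_const {X : Type*} [TopologicalSpace X] {f b : X → ℝ} {c : ℝ}
    {x₀ : X} (h : ∀ r, f r + b r ^ 2 = c) (hb : b x₀ = 0) : IsLocalMax f x₀ :=
  Filter.Eventually.of_forall fun r => by nlinarith [h r, h x₀, sq_nonneg (b r)]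

theorem statement15_general
    (φ : ℝ) (B1 B2 B3 αf : ℝ → ℝ)
    (hB1d : DifferentiableAt ℝ B1 0) (hB2d : DifferentiableAt ℝ B2 0)
    (hαd : DifferentiableAt ℝ αf 0)
    (hB10 : B1 0 = Real.cos φ) (hB20 : B2 0 = Real.sin φ) (hB30 : B3 0 = 0)
    (hα0 : αf 0 = 1)
    (hnorm : ∀ r, B1 r ^ 2 + αf r * B2 r ^ 2 + B3 r ^ 2 = 1)
    (u1 u2 : ℝ)
    (hu1 : u1 = (1/2) * Real.sin φ * deriv αf 0 + deriv B2 0)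
    (hu2 : u2 = -(1/2) * Real.cos φ * deriv αf 0 - deriv B1 0) :
    -2 * u2 * Real.cos φ + 2 * u1 * Real.sin φ
      + Real.cos φ ^ 2 * deriv (fun r => (αf r)⁻¹) 0 = 0 := by
  have hderiv : HasDerivAt (fun r => B1 r ^ 2 + αf r * B2 r ^ 2)
      (2 * B1 0 * deriv B1 0 + (deriv αf 0 * B2 0 ^ 2 + αf 0 * (2 * B2 0 * deriv B2 0))) 0 := by
    have hsq : ∀ {B : ℝ → ℝ}, DifferentiableAt ℝ B 0 →
        HasDerivAt (fun r => B r ^ 2) (2 * B 0 * deriv B 0) 0 := fun hB => by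
      simpa [mul_comm, mul_left_comm] using hB.hasDerivAt.fun_pow 2
    exact (hsq hB1d).add (hαd.hasDerivAt.mul (hsq hB2d))
  -- `B1² + α B2² = 1 - B3²` is maximal where `B3` vanishes, so `0` is a critical point.
  have hcrit := (isLocalMax_of_add_sq_eq_const hnorm hB30).hasDerivAt_eq_zero hderiv
  have hinv : deriv (fun r => (αf r)⁻¹) 0 = -deriv αf 0 := by
    rw [deriv_fun_inv'' hαd (by rw [hα0]; exact one_ne_zero), hα0]; ring
  rw [hB10, hB20, hα0] at hcrit
  rw [hu1, hu2, hinv]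
  linear_combination hcrit

/-- The algebraic cancellation of Lemma `lem.annulr`:
with `u₁ = ½ sin φ ∂_rα + ∂₁𝓑₂`, `u₂ = −½ cos φ ∂_rα − ∂₁𝓑₁` (at `(0,s,0)`), the
normalization `𝓑₁² + α 𝓑₂² + 𝓑₃² = 1` on the boundary, `α(0) = 1`,
`𝓑₁(0) = cos φ`, `𝓑₂(0) = sin φ`, `𝓑₃(0) = 0`, one has
`−2u₂ cos φ + 2u₁ sin φ + cos²φ ∂_r(α⁻¹) = 0`.
(Here `s` is fixed and all quantities are viewed as functions of `r`.) -/
theorem statement15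
    (φ : ℝ) (B1 B2 B3 αf : ℝ → ℝ)
    (hB1d : DifferentiableAt ℝ B1 0) (hB2d : DifferentiableAt ℝ B2 0)
    (hB3d : DifferentiableAt ℝ B3 0) (hαd : DifferentiableAt ℝ αf 0)
    (hB10 : B1 0 = Real.cos φ) (hB20 : B2 0 = Real.sin φ) (hB30 : B3 0 = 0)
    (hα0 : αf 0 = 1)
    (hnorm : ∀ r, B1 r ^ 2 + αf r * B2 r ^ 2 + B3 r ^ 2 = 1)
    (u1 u2 : ℝ)
    (hu1 : u1 = (1/2) * Real.sin φ * deriv αf 0 + deriv B2 0)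
    (hu2 : u2 = -(1/2) * Real.cos φ * deriv αf 0 - deriv B1 0) :
    -2 * u2 * Real.cos φ + 2 * u1 * Real.sin φ
      + Real.cos φ ^ 2 * deriv (fun r => (αf r)⁻¹) 0 = 0 :=
  statement15_general φ B1 B2 B3 αf hB1d hB2d hαd hB10 hB20 hB30 hα0 hnorm u1 u2 hu1 hu2
end
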